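/- In the generalized map Witt algebra M, if D is a degree-0 derivation from M to M⊗M vanishing on the subalgebra W = span{L_α · 1 : α ∈ Γ}, and if D(L_0 z) = (L_0 ⊗ L_0) f_z with D(L_α z) = (L_α ⊗ L_0) f_z + (L_0 ⊗ L_α) f_z for all α ≠ 0, then applying D to the relation [L_{−α}·1, L_α x] = 2α L_0 x forces f_x = 0 for all x ∈ A, hence D = 0. -/

import Mathlib

open Finsupp TensorProduct

/-- Bracket of the generalized map Witt algebra `[L_α x, L_β y] = (β−α)L_{α+β}(xy)`,
as a bilinear map on `M = W(Γ) ⊗ A = Γ →₀ A`. -/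
noncomputable def bkM {F : Type*} [Field F] (Γ : AddSubgroup F)
    (A : Type*) [CommRing A] [Algebra F A] :
    (Γ →₀ A) →ₗ[F] (Γ →₀ A) →ₗ[F] (Γ →₀ A) :=
  Finsupp.lsum F fun α =>
    (Finsupp.lsum (R := F) (S := F) (M := A) (N := (Γ →₀ A))).toLinearMap.comp
      (LinearMap.pi fun β : Γ =>
        ((β : F) - (α : F)) •
          ((LinearMap.llcomp F A A (Γ →₀ A) (Finsupp.lsingle (α + β))).comp
            (LinearMap.mul F A)))

/-- Diagonal adjoint action of `M` on `V = M ⊗ M`. -/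
noncomputable def actM {F : Type*} [Field F] (Γ : AddSubgroup F)
    (A : Type*) [CommRing A] [Algebra F A] (x : Γ →₀ A) :
    ((Γ →₀ A) ⊗[F] (Γ →₀ A)) →ₗ[F] ((Γ →₀ A) ⊗[F] (Γ →₀ A)) :=
  LinearMap.rTensor _ (bkM Γ A x) + LinearMap.lTensor _ (bkM Γ A x)

noncomputable instance instZeroTensorM2 {F : Type*} [Field F] (Γ : AddSubgroup F)
    (A : Type*) [CommRing A] [Algebra F A] :
    Zero ((Γ →₀ A) ⊗[F] (Γ →₀ A)) :=
  ⟨(inferInstance : AddCommMonoid ((Γ →₀ A) ⊗[F] (Γ →₀ A))).zero⟩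

/-- The embedding `A ⊗ A → M ⊗ M`, `f ↦ (L_α ⊗ L_β) f`. -/
noncomputable def embM {F : Type*} [Field F] (Γ : AddSubgroup F)
    (A : Type*) [CommRing A] [Algebra F A] (α β : Γ) :
    (A ⊗[F] A) →ₗ[F] ((Γ →₀ A) ⊗[F] (Γ →₀ A)) :=
  TensorProduct.map (Finsupp.lsingle α) (Finsupp.lsingle β)

/-!
Apply `D` to `[L_{-α} 1, L_α x] = 2α L_0 x` for some `α ≠ 0`. As `D(L_{-α} 1) = 0`, the right
side is `L_{-α} · D(L_α x)`, whose `(0, 0)`-component is `4α f_x`, while the left side has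
`(0, 0)`-component `2α f_x`. So `2α f_x = 0`, hence `f_x = 0` in characteristic zero, and `D`
vanishes on every `L_β z`.
-/

section
variable {F : Type*} [Field F] (Γ : AddSubgroup F) (A : Type*) [CommRing A] [Algebra F A]

lemma bkM_single (α β : Γ) (x y : A) :
    bkM Γ A (single α x) (single β y) = ((β : F) - α) • single (α + β) (x * y) := by
  simp [bkM]

lemma actM_single_one_embM (γ α β : Γ) (t : A ⊗[F] A) :
    actM Γ A (single γ 1) (embM Γ A α β t)
      = ((α : F) - γ) • embM Γ A (γ + α) β t + ((β : F) - γ) • embM Γ A α (γ + β) t := by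
  induction t using TensorProduct.induction_on with
  | zero => simp
  | tmul a b =>
    simp only [actM, LinearMap.add_apply, LinearMap.rTensor_tmul, LinearMap.lTensor_tmul, embM,
      map_tmul, lsingle_apply, bkM_single, one_mul, ← smul_tmul', tmul_smul]
  | add s t hs ht =>
    simp only [map_add, hs, ht, smul_add]
    abel

open Classical in
lemma map_lapply_embM (γ δ α β : Γ) (t : A ⊗[F] A) :
    map (lapply γ) (lapply δ) (embM Γ A α β t) = if α = γ ∧ β = δ then t else 0 := by
  induction t using TensorProduct.induction_on with
  | zero => simp
  | tmul a b => by_cases hα : α = γ <;> by_cases hβ : β = δ <;> simp [embM, hα, hβ]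
  | add s t hs ht =>
    simp only [map_add, hs, ht]
    split_ifs <;> simp

end

theorem map_witt_degree_zero_derivation_vanishes_general
    {F : Type*} [Field F] [CharZero F] (Γ : AddSubgroup F)
    (hne : ∃ α : Γ, α ≠ 0)
    (A : Type*) [CommRing A] [Algebra F A]
    (D : (Γ →₀ A) →ₗ[F] ((Γ →₀ A) ⊗[F] (Γ →₀ A)))
    (hD : ∀ u v, D (bkM Γ A u v) = actM Γ A u (D v) - actM Γ A v (D u))
    (hW : ∀ α : Γ, D (Finsupp.single α (1 : A)) = 0)
    (f : A → A ⊗[F] A)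
    (hf0 : ∀ z : A, D (Finsupp.single (0 : Γ) z) = embM Γ A 0 0 (f z))
    (hfa : ∀ α : Γ, α ≠ 0 → ∀ z : A,
      D (Finsupp.single α z) = embM Γ A α 0 (f z) + embM Γ A 0 α (f z)) :
    (∀ x : A, f x = 0) ∧ D = 0 := by
  obtain ⟨α, hα⟩ := hne
  have hf : ∀ x, f x = 0 := by
    intro x
    have key := congrArg (map (lapply 0) (lapply 0)) (hD (single (-α) 1) (single α x))
    simp only [bkM_single, hW, map_zero, sub_zero, neg_add_cancel, add_zero, one_mul, map_smul,
      map_sub, map_add, hf0, hfa α hα, actM_single_one_embM, map_lapply_embM, and_self, if_true,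
      neg_eq_zero, hα, if_false, smul_zero, zero_add, AddSubgroup.coe_neg,
      sub_neg_eq_add] at key
    -- key : (α + α) • f x = (α + α) • f x + (α + α) • f x
    have h2 : ((α : F) + α) • f x = 0 := left_eq_add.mp key
    exact (smul_eq_zero.mp h2).resolve_left (by simpa [← two_mul] using hα)
  refine ⟨hf, Finsupp.lhom_ext fun β z => ?_⟩
  by_cases hβ : β = 0
  · simp [hβ, hf0, hf]
  · simp [hfa β hβ, hf]

/-- a degree-zero derivation `D : M → M ⊗ M` vanishing on
`W = span{L_α · 1}` whose values are `D(L_0 z) = (L_0⊗L_0) f_z` and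
`D(L_α z) = (L_α⊗L_0) f_z + (L_0⊗L_α) f_z` for `α ≠ 0` satisfies `f_x = 0` for
all `x ∈ A` (via the relation `[L_{−α}·1, L_α x] = 2α L_0 x`), hence `D = 0`. -/
theorem map_witt_degree_zero_derivation_vanishes
    {F : Type*} [Field F] [CharZero F] (Γ : AddSubgroup F) (h1 : (1 : F) ∈ Γ)
    (hne : ∃ α : Γ, α ≠ 0)
    (A : Type*) [CommRing A] [Algebra F A] [IsDomain (A ⊗[F] A)]
    (D : (Γ →₀ A) →ₗ[F] ((Γ →₀ A) ⊗[F] (Γ →₀ A)))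
    (hD : ∀ u v, D (bkM Γ A u v) = actM Γ A u (D v) - actM Γ A v (D u))
    (hW : ∀ α : Γ, D (Finsupp.single α (1 : A)) = 0)
    (f : A → A ⊗[F] A)
    (hf0 : ∀ z : A, D (Finsupp.single (0 : Γ) z) = embM Γ A 0 0 (f z))
    (hfa : ∀ α : Γ, α ≠ 0 → ∀ z : A,
      D (Finsupp.single α z) = embM Γ A α 0 (f z) + embM Γ A 0 α (f z)) :
    (∀ x : A, f x = 0) ∧ D = 0 :=
  map_witt_degree_zero_derivation_vanishes_general Γ hne A D hD hW f hf0 hfa
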